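/- Let d ≥ 1, let q_1, …, q_d be positive integers, let R_1, …, R_d be positive real numbers, for each ℓ let G_ℓ be a holomorphic function on the open disc D(0, R_ℓ) ⊂ ℂ, and for each N ∈ ℕ^* let (h(N, ν))_{0 ≤ ν ≤ N} be a strictly increasing finite sequence of points of [−1,1]. Set V = { (a, x) ∈ ℝ × ℝ^d : (|a| + 2)^{q_ℓ} |x_ℓ| < R_ℓ for ℓ = 1, …, d }. Then the sequence of functions (a, x) ↦ Σ_{ν=0}^N ( Π_{ν'=0, ν'≠ν}^N (a − h(N,ν')) / (h(N,ν) − h(N,ν')) ) Π_{ℓ=1}^d G_ℓ( h(N,ν)^{q_ℓ} x_ℓ ) converges, as N → ∞, to (a, x) ↦ Π_{ℓ=1}^d G_ℓ( a^{q_ℓ} x_ℓ ), uniformly on every compact subset of V. -/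

import Mathlib

/-!
Hermite's formula writes the error of Lagrange interpolation at `a` of a function `F` holomorphic
on a closed disc `|z| ≤ r` containing `a` and the nodes as
`(2πi)⁻¹ ∮ ω(a) F(z) / (ω(z) (z - a)) dz`, where `ω` is the node polynomial.
For `p = (a, x) ∈ K` take `F(z) = ∏ ℓ, G ℓ (z ^ q ℓ * x ℓ)` and `r = |a| + 2 + t`: compactness
of `K` provides a single `t > 0` for which every such `F` is holomorphic on its disc and all of
them are bounded by one constant. As the nodes lie in `[-1, 1]`, on the circle
`|ω(a)| / |ω(z)| ≤ ((|a| + 1) / (|a| + 1 + t)) ^ (N + 1)`, which tends to `0` uniformly for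
bounded `a`.
-/

open Polynomial Finset Filter Topology

namespace Lagrange

section Field

variable {F ι : Type*} [Field F] {s : Finset ι} {v : ι → F}

theorem exists_X_sub_C_mul_eq_C_eval_sub_nodal (s : Finset ι) (v : ι → F) (z : F) :
    ∃ Q : F[X], Q.degree < #s ∧ (X - C z) * Q = C ((nodal s v).eval z) - nodal s v := by
  refine ⟨(C ((nodal s v).eval z) - nodal s v) /ₘ (X - C z), ?_,
    mul_divByMonic_eq_iff_isRoot.2 (by simp)⟩
  by_cases hP : C ((nodal s v).eval z) - nodal s v = 0
  · simp [hP]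
  refine (degree_divByMonic_lt _ _ hP (by simp)).trans_le
    ((degree_sub_le _ _).trans (max_le ?_ degree_nodal.le))
  exact degree_C_le.trans Nat.WithBot.coe_nonneg

variable [DecidableEq ι]

theorem eval_basis (a : F) (i : ι) :
    (Lagrange.basis s v i).eval a = ∏ j ∈ s.erase i, (a - v j) / (v i - v j) := by
  simp only [Lagrange.basis, basisDivisor, eval_prod, eval_mul, eval_C, eval_sub, eval_X]
  exact prod_congr rfl fun j _ => inv_mul_eq_div _ _

theorem eval_nodal_div_eq_inv_sub_sum (hvs : Set.InjOn v s) {a z : F}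
    (hz : ∀ i ∈ s, z ≠ v i) (hza : z ≠ a) :
    (nodal s v).eval a / ((nodal s v).eval z * (z - a)) =
      (z - a)⁻¹ - ∑ i ∈ s, (Lagrange.basis s v i).eval a / (z - v i) := by
  have hωz : (nodal s v).eval z ≠ 0 := eval_nodal_not_at_node hz
  obtain ⟨Q, hQdeg, hQ⟩ := exists_X_sub_C_mul_eq_C_eval_sub_nodal s v z
  have hQa : (a - z) * Q.eval a = (nodal s v).eval z - (nodal s v).eval a := by
    simpa using congrArg (eval a) hQ
  have hQv : ∀ i ∈ s, Q.eval (v i) = (nodal s v).eval z / (v i - z) := by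
    intro i hi
    have := congrArg (eval (v i)) hQ
    simp only [eval_mul, eval_sub, eval_X, eval_C, eval_nodal_at_node hi, sub_zero] at this
    rw [eq_div_iff (sub_ne_zero.2 (hz i hi).symm), ← this, mul_comm]
  have hsum : ∑ i ∈ s, (Lagrange.basis s v i).eval a / (z - v i) =
      -(Q.eval a / (nodal s v).eval z) := by
    conv_rhs => rw [eq_interpolate hvs hQdeg]
    rw [interpolate_apply, eval_finsetSum, sum_div, ← sum_neg_distrib]
    refine sum_congr rfl fun i hi => ?_
    have hvz : z - v i ≠ 0 := sub_ne_zero.2 (hz i hi)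
    rw [eval_mul, eval_C, hQv i hi, ← neg_sub z]
    field_simp
  have hza' : z - a ≠ 0 := sub_ne_zero.2 hza
  rw [hsum]
  field_simp
  linear_combination hQa

end Field

section Normed

variable {𝕜 ι : Type*} [NormedField 𝕜] {s : Finset ι} {v : ι → 𝕜} {c x : 𝕜} {ρ : ℝ}

theorem norm_eval_nodal_le (hv : ∀ i ∈ s, ‖v i - c‖ ≤ ρ) :
    ‖(nodal s v).eval x‖ ≤ (‖x - c‖ + ρ) ^ #s := by
  rw [eval_nodal, norm_prod, ← prod_const]
  refine prod_le_prod (fun _ _ => norm_nonneg _) fun i hi => ?_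
  calc ‖x - v i‖ ≤ ‖x - c‖ + ‖v i - c‖ := norm_sub_le_norm_sub_add_norm_sub x c (v i) |>.trans
        (by rw [norm_sub_rev c])
    _ ≤ ‖x - c‖ + ρ := by gcongr; exact hv i hi

theorem pow_le_norm_eval_nodal (hv : ∀ i ∈ s, ‖v i - c‖ ≤ ρ) (hx : ρ ≤ ‖x - c‖) :
    (‖x - c‖ - ρ) ^ #s ≤ ‖(nodal s v).eval x‖ := by
  rw [eval_nodal, norm_prod, ← prod_const]
  refine prod_le_prod (fun _ _ => sub_nonneg.2 hx) fun i hi => ?_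
  calc ‖x - c‖ - ρ ≤ ‖x - c‖ - ‖v i - c‖ := by gcongr; exact hv i hi
    _ ≤ ‖x - v i‖ := by
      have := norm_sub_le_norm_sub_add_norm_sub x (v i) c
      linarith

end Normed

end Lagrange

section Hermite

open Metric Real Lagrange

variable {ι : Type*} [DecidableEq ι] {s : Finset ι} {v : ι → ℂ} {c a : ℂ} {r : ℝ} {F : ℂ → ℂ}

theorem DiffContOnCl.circleIntegrable_sub_inv_mul (hF : DiffContOnCl ℂ F (ball c r)) {w : ℂ}
    (hw : w ∈ ball c r) : CircleIntegrable (fun z => (z - w)⁻¹ * F z) c r := by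
  have hr : 0 ≤ r := dist_nonneg.trans (mem_ball.1 hw).le
  refine CircleIntegrable.fun_mul_continuousOn ?_ ?_
  · exact circleIntegrable_sub_inv_iff.2 (Or.inr fun h => by
      rw [abs_of_nonneg hr, mem_sphere] at h; exact (mem_ball.1 hw).ne h)
  · rw [abs_of_nonneg hr]
    exact hF.continuousOn_ball.mono sphere_subset_closedBall

/-- Hermite's formula for the remainder of Lagrange interpolation. -/
theorem circleIntegral_eval_nodal_div_mul (hvs : Set.InjOn v s) (hv : ∀ i ∈ s, v i ∈ ball c r)
    (ha : a ∈ ball c r) (hF : DiffContOnCl ℂ F (ball c r)) :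
    (∮ z in C(c, r), (nodal s v).eval a / ((nodal s v).eval z * (z - a)) * F z) =
      2 * π * Complex.I * (F a - ∑ i ∈ s, (Lagrange.basis s v i).eval a * F (v i)) := by
  have hr : 0 ≤ r := dist_nonneg.trans (mem_ball.1 ha).le
  have hne : ∀ w ∈ ball c r, ∀ z ∈ sphere c r, z ≠ w := fun w hw z hz h =>
    (mem_ball.1 hw).ne (h ▸ mem_sphere.1 hz)
  calc (∮ z in C(c, r), (nodal s v).eval a / ((nodal s v).eval z * (z - a)) * F z)
      = ∮ z in C(c, r), ((z - a)⁻¹ * F z -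
          ∑ i ∈ s, (Lagrange.basis s v i).eval a * ((z - v i)⁻¹ * F z)) := by
        refine circleIntegral.integral_congr hr fun z hz => ?_
        rw [eval_nodal_div_eq_inv_sub_sum hvs (fun i hi => hne _ (hv i hi) z hz) (hne a ha z hz)]
        simp only [sub_mul, sum_mul, div_eq_mul_inv, mul_assoc]
    _ = 2 * π * Complex.I * (F a - ∑ i ∈ s, (Lagrange.basis s v i).eval a * F (v i)) := by
        have hint : ∀ i ∈ s, CircleIntegrable
            (fun z => (Lagrange.basis s v i).eval a * ((z - v i)⁻¹ * F z)) c r := fun i hi =>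
          (hF.circleIntegrable_sub_inv_mul (hv i hi)).const_fun_smul
        have hcauchy : ∀ w ∈ ball c r,
            (∮ z in C(c, r), (z - w)⁻¹ * F z) = 2 * π * Complex.I * F w :=
          fun w hw => hF.circleIntegral_sub_inv_smul hw
        rw [circleIntegral.integral_sub (hF.circleIntegrable_sub_inv_mul ha)
            (CircleIntegrable.fun_sum s hint), circleIntegral.integral_fun_sum hint, hcauchy a ha,
          mul_sub, mul_sum]
        congr 1
        refine sum_congr rfl fun i hi => ?_
        rw [circleIntegral.integral_const_mul, hcauchy _ (hv i hi)]
        ring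

theorem norm_sum_eval_basis_mul_sub_le (hvs : Set.InjOn v s) {ρ M : ℝ} (hρ : 0 ≤ ρ)
    (hv : ∀ i ∈ s, ‖v i - c‖ ≤ ρ) (hρr : ρ < r) (ha : ‖a - c‖ < r)
    (hF : DiffContOnCl ℂ F (ball c r)) (hM : ∀ z ∈ sphere c r, ‖F z‖ ≤ M) :
    ‖∑ i ∈ s, (Lagrange.basis s v i).eval a * F (v i) - F a‖ ≤
      r * ((‖a - c‖ + ρ) ^ #s / ((r - ρ) ^ #s * (r - ‖a - c‖)) * M) := by
  have hr : 0 < r := (norm_nonneg _).trans_lt ha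
  have hbound : ∀ z ∈ sphere c r, ‖(nodal s v).eval a / ((nodal s v).eval z * (z - a)) * F z‖ ≤
      (‖a - c‖ + ρ) ^ #s / ((r - ρ) ^ #s * (r - ‖a - c‖)) * M := by
    intro z hz
    have hzc : ‖z - c‖ = r := mem_sphere_iff_norm.1 hz
    have hza : r - ‖a - c‖ ≤ ‖z - a‖ := by
      linarith [norm_sub_le_norm_sub_add_norm_sub z a c]
    have hωz := pow_le_norm_eval_nodal (x := z) hv (hzc ▸ hρr.le)
    rw [hzc] at hωz
    have hcoef : 0 ≤ (‖a - c‖ + ρ) ^ #s / ((r - ρ) ^ #s * (r - ‖a - c‖)) := by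
      have := sub_pos.2 hρr; have := sub_pos.2 ha; positivity
    rw [norm_mul, norm_div, norm_mul]
    gcongr
    · exact norm_eval_nodal_le hv
    · exact hM z hz
  have hI := circleIntegral.norm_integral_le_of_norm_le_const hr.le hbound
  rw [circleIntegral_eval_nodal_div_mul hvs
    (fun i hi => mem_ball_iff_norm.2 ((hv i hi).trans_lt hρr)) (mem_ball_iff_norm.2 ha) hF,
    norm_mul, norm_sub_rev] at hI
  have h2π : ‖(2 * π * Complex.I : ℂ)‖ = 2 * π := by simp [pi_pos.le]
  rw [h2π, mul_assoc (2 * π) r] at hI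
  exact le_of_mul_le_mul_left hI (by positivity)

end Hermite

section Superoscillation

open Metric

variable {κ : Type*} [Fintype κ] {q : κ → ℕ} {Rad : κ → ℝ} {G : κ → ℂ → ℂ}

theorem pow_mul_ofReal_mem_ball {z : ℂ} {r x R : ℝ} {n : ℕ} (hz : ‖z‖ ≤ r) (h : r ^ n * |x| < R) :
    z ^ n * (x : ℂ) ∈ ball (0 : ℂ) R := by
  rw [mem_ball_zero_iff, norm_mul, norm_pow, Complex.norm_real, Real.norm_eq_abs]
  exact lt_of_le_of_lt (by gcongr) h

theorem differentiableOn_prod_pow_mul (hG : ∀ ℓ, DifferentiableOn ℂ (G ℓ) (ball 0 (Rad ℓ)))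
    {x : κ → ℝ} {r : ℝ} (hx : ∀ ℓ, r ^ q ℓ * |x ℓ| < Rad ℓ) :
    DifferentiableOn ℂ (fun z : ℂ => ∏ ℓ, G ℓ (z ^ q ℓ * x ℓ)) (closedBall 0 r) :=
  DifferentiableOn.fun_finsetProd fun ℓ _ => (hG ℓ).comp (by fun_prop) fun _ hz =>
    pow_mul_ofReal_mem_ball (mem_closedBall_zero_iff.1 hz) (hx ℓ)

theorem IsCompact.exists_norm_prod_pow_mul_le {X : Type*} [TopologicalSpace X] {K : Set X}
    (hK : IsCompact K) (hG : ∀ ℓ, ContinuousOn (G ℓ) (ball 0 (Rad ℓ))) {ρ : X → ℝ}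
    (hρ : Continuous ρ) {x : X → κ → ℝ} (hx : Continuous x)
    (hKρ : ∀ p ∈ K, ∀ ℓ, ρ p ^ q ℓ * |x p ℓ| < Rad ℓ) :
    ∃ M, ∀ p ∈ K, ∀ z : ℂ, ‖z‖ ≤ ρ p → ‖∏ ℓ, G ℓ (z ^ q ℓ * x p ℓ)‖ ≤ M := by
  obtain ⟨B, hB⟩ := hK.exists_bound_of_continuousOn hρ.continuousOn
  set S : Set (ℂ × X) := closedBall 0 B ×ˢ K ∩ {w | ‖w.1‖ ≤ ρ w.2}
  have hS : IsCompact S :=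
    ((isCompact_closedBall 0 B).prod hK).inter_right (isClosed_le (by fun_prop) (by fun_prop))
  have hcont : ContinuousOn (fun w : ℂ × X => ∏ ℓ, G ℓ (w.1 ^ q ℓ * x w.2 ℓ)) S :=
    continuousOn_finsetProd _ fun ℓ _ => (hG ℓ).comp (by fun_prop) fun w hw =>
      pow_mul_ofReal_mem_ball hw.2 (hKρ w.2 hw.1.2 ℓ)
  obtain ⟨M, hM⟩ := hS.exists_bound_of_continuousOn hcont
  refine ⟨M, fun p hp z hz => hM (z, p) ⟨⟨?_, hp⟩, hz⟩⟩
  exact mem_closedBall_zero_iff.2 (hz.trans ((le_abs_self _).trans (hB p hp)))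

theorem exists_pos_forall_add_pow_mul_lt {K : Set (ℝ × (κ → ℝ))} (hK : IsCompact K)
    (hKV : ∀ p ∈ K, ∀ ℓ, (|p.1| + 2) ^ q ℓ * |p.2 ℓ| < Rad ℓ) :
    ∃ t > 0, ∀ p ∈ K, ∀ ℓ, (|p.1| + 2 + t) ^ q ℓ * |p.2 ℓ| < Rad ℓ := by
  have hopen : IsOpen
      {w : ℝ × (ℝ × (κ → ℝ)) | ∀ ℓ, (|w.2.1| + 2 + w.1) ^ q ℓ * |w.2.2 ℓ| < Rad ℓ} := by
    simp only [Set.ofPred_forall]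
    exact isOpen_iInter_of_finite fun ℓ => isOpen_lt (by fun_prop) (by fun_prop)
  have hnear : ∀ᶠ t in 𝓝 (0 : ℝ), ∀ p ∈ K, ∀ ℓ, (|p.1| + 2 + t) ^ q ℓ * |p.2 ℓ| < Rad ℓ :=
    hK.eventually_forall_of_forall_eventually fun p hp =>
      hopen.mem_nhds (by simpa using hKV p hp)
  obtain ⟨t, hKt, ht⟩ :=
    ((hnear.filter_mono nhdsWithin_le_nhds).and (self_mem_nhdsWithin (s := Set.Ioi 0))).exists
  exact ⟨t, ht, hKt⟩

theorem interpolation_error_bound_le_geometric {α A t M : ℝ} (n : ℕ) (hα : 0 ≤ α) (hαA : α ≤ A)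
    (ht : 0 < t) (hM : 0 ≤ M) :
    (α + 2 + t) * ((α + 1) ^ n / ((α + 2 + t - 1) ^ n * (α + 2 + t - α)) * M) ≤
      (A + 2 + t) / (2 + t) * M * ((A + 1) / (A + 1 + t)) ^ n := by
  have hA : 0 ≤ A := hα.trans hαA
  have hratio : (α + 1) / (α + 1 + t) ≤ (A + 1) / (A + 1 + t) := by
    rw [div_le_div_iff₀ (by positivity) (by linarith)]
    nlinarith
  calc (α + 2 + t) * ((α + 1) ^ n / ((α + 2 + t - 1) ^ n * (α + 2 + t - α)) * M)
      = (α + 2 + t) / (2 + t) * M * ((α + 1) / (α + 1 + t)) ^ n := by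
        rw [show α + 2 + t - 1 = α + 1 + t by ring, show α + 2 + t - α = 2 + t by ring, div_pow]
        field_simp
    _ ≤ (A + 2 + t) / (2 + t) * M * ((A + 1) / (A + 1 + t)) ^ n := by gcongr

end Superoscillation

theorem statement_8_general (d : ℕ) (q : Fin d → ℕ)
    (Rad : Fin d → ℝ)
    (G : Fin d → ℂ → ℂ)
    (hG : ∀ ℓ, DifferentiableOn ℂ (G ℓ) (Metric.ball (0 : ℂ) (Rad ℓ)))
    (h : ℕ → ℕ → ℝ)
    (hmem : ∀ N : ℕ, 1 ≤ N → ∀ ν ≤ N, h N ν ∈ Set.Icc (-1 : ℝ) 1)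
    (hmono : ∀ N : ℕ, 1 ≤ N → ∀ ν ν' : ℕ, ν < ν' → ν' ≤ N → h N ν < h N ν')
    (K : Set (ℝ × (Fin d → ℝ))) (hK : IsCompact K)
    (hKV : K ⊆ {p : ℝ × (Fin d → ℝ) | ∀ ℓ, (|p.1| + 2) ^ (q ℓ) * |p.2 ℓ| < Rad ℓ}) :
    ∀ ε > 0, ∃ M : ℕ, ∀ N : ℕ, 1 ≤ N → M ≤ N → ∀ p ∈ K,
      ‖(∑ ν ∈ Finset.range (N + 1),
          (∏ ν' ∈ (Finset.range (N + 1)).erase ν,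
            (((p.1 - h N ν') / (h N ν - h N ν') : ℝ) : ℂ)) *
            ∏ ℓ, G ℓ ((h N ν ^ (q ℓ) * p.2 ℓ : ℝ))) -
        ∏ ℓ, G ℓ ((p.1 ^ (q ℓ) * p.2 ℓ : ℝ))‖ < ε := by
  intro ε hε
  obtain ⟨t, ht, hKt⟩ := exists_pos_forall_add_pow_mul_lt hK hKV
  obtain ⟨A, hA0, hA⟩ := hK.isBounded.exists_pos_norm_le
  obtain ⟨M, hM⟩ := hK.exists_norm_prod_pow_mul_le (fun ℓ => (hG ℓ).continuousOn)
    (ρ := fun p => |p.1| + 2 + t) (by fun_prop) continuous_snd hKt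
  have hdecay : Tendsto
      (fun N : ℕ => (A + 2 + t) / (2 + t) * M * ((A + 1) / (A + 1 + t)) ^ (N + 1)) atTop (𝓝 0) := by
    have hθ : (A + 1) / (A + 1 + t) < 1 := (div_lt_one (by positivity)).2 (by linarith)
    simpa using ((tendsto_pow_atTop_nhds_zero_of_lt_one (by positivity) hθ).comp
      (tendsto_add_atTop_nat 1)).const_mul ((A + 2 + t) / (2 + t) * M)
  obtain ⟨N₀, hN₀⟩ := eventually_atTop.1 (hdecay.eventually_lt_const hε)
  refine ⟨N₀, fun N hN hNN₀ p hp => ?_⟩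
  have hM0 : 0 ≤ M := (norm_nonneg _).trans (hM p hp 0 (by rw [norm_zero]; positivity))
  have hinj : Set.InjOn (fun ν => (h N ν : ℂ)) (Finset.range (N + 1)) :=
    Complex.ofReal_injective.comp_injOn <| StrictMonoOn.injOn fun i _ j hj hij =>
      hmono N hN i j hij (Nat.lt_succ_iff.1 (Finset.mem_range.1 hj))
  have hnodes : ∀ ν ∈ Finset.range (N + 1), ‖(h N ν : ℂ) - 0‖ ≤ 1 := fun ν hν => by
    rw [sub_zero, Complex.norm_real, Real.norm_eq_abs]
    exact abs_le.2 (hmem N hN ν (Nat.lt_succ_iff.1 (Finset.mem_range.1 hν)))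
  have hbound := norm_sum_eval_basis_mul_sub_le hinj zero_le_one hnodes (a := p.1)
    (r := |p.1| + 2 + t) (by linarith [abs_nonneg p.1])
    (by rw [sub_zero, Complex.norm_real, Real.norm_eq_abs]; linarith)
    ((differentiableOn_prod_pow_mul hG (hKt p hp)).diffContOnCl_ball subset_rfl)
    (fun z hz => hM p hp z (by simpa using hz.le))
  simp only [Lagrange.eval_basis, sub_zero, Complex.norm_real, Real.norm_eq_abs,
    Finset.card_range] at hbound
  push_cast
  calc _ ≤ _ := hbound
    _ ≤ _ := interpolation_error_bound_le_geometric (N + 1) (abs_nonneg _)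
        ((norm_fst_le p).trans (hA p hp)) ht hM0
    _ < ε := hN₀ N hNN₀

/-- (Example 3.2) Lagrange-type superoscillating sequences in several variables:
uniform convergence on compacts of `V_{d,q,R}` of
`Σ_ν (∏_{ν'≠ν} (a - h(N,ν'))/(h(N,ν) - h(N,ν'))) ∏_ℓ G_ℓ(h(N,ν)^{q_ℓ} x_ℓ)`
to `∏_ℓ G_ℓ(a^{q_ℓ} x_ℓ)`. -/
theorem statement_8 (d : ℕ) (hd : 1 ≤ d) (q : Fin d → ℕ) (hq : ∀ ℓ, 1 ≤ q ℓ)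
    (Rad : Fin d → ℝ) (hRad : ∀ ℓ, 0 < Rad ℓ)
    (G : Fin d → ℂ → ℂ)
    (hG : ∀ ℓ, DifferentiableOn ℂ (G ℓ) (Metric.ball (0 : ℂ) (Rad ℓ)))
    (h : ℕ → ℕ → ℝ)
    (hmem : ∀ N : ℕ, 1 ≤ N → ∀ ν ≤ N, h N ν ∈ Set.Icc (-1 : ℝ) 1)
    (hmono : ∀ N : ℕ, 1 ≤ N → ∀ ν ν' : ℕ, ν < ν' → ν' ≤ N → h N ν < h N ν')
    (K : Set (ℝ × (Fin d → ℝ))) (hK : IsCompact K)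
    (hKV : K ⊆ {p : ℝ × (Fin d → ℝ) | ∀ ℓ, (|p.1| + 2) ^ (q ℓ) * |p.2 ℓ| < Rad ℓ}) :
    ∀ ε > 0, ∃ M : ℕ, ∀ N : ℕ, 1 ≤ N → M ≤ N → ∀ p ∈ K,
      ‖(∑ ν ∈ Finset.range (N + 1),
          (∏ ν' ∈ (Finset.range (N + 1)).erase ν,
            (((p.1 - h N ν') / (h N ν - h N ν') : ℝ) : ℂ)) *
            ∏ ℓ, G ℓ ((h N ν ^ (q ℓ) * p.2 ℓ : ℝ))) -
        ∏ ℓ, G ℓ ((p.1 ^ (q ℓ) * p.2 ℓ : ℝ))‖ < ε :=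
  statement_8_general d q Rad G hG h hmem hmono K hK hKV
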